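/- arXiv:2102.10931 — 12 statements merged into one kernel-verified Lean document; each statement's English description precedes it below -/
import Mathlib

section
/- If a probabilistic team satisfies a conditional independence atom x ⊥_z y (in probabilistic team semantics), then its support team satisfies x ⊥_z y in relational team semantics. -/
open Classical in
/-- Probability of the event `E` under the weight function `P`. -/
noncomputable def pr {σ : Type*} [Fintype σ] (P : σ → ℝ) (E : σ → Prop) : ℝ :=
  ∑ s, if E s then P s else 0

/-- Conditional probability P(E | C). -/
noncomputable def condPr {σ : Type*} [Fintype σ] (P : σ → ℝ) (E C : σ → Prop) : ℝ :=
  pr P (fun s => E s ∧ C s) / pr P C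

/-- Probabilistic conditional independence x̄ ⊥_z̄ ȳ: for all values taken in the
support, P(x̄=a, ȳ=b | z̄=c) = P(x̄=a | z̄=c) · P(ȳ=b | z̄=c). -/
def pIndep {σ α β γ : Type*} [Fintype σ] (P : σ → ℝ) (f : σ → α) (g : σ → β) (h : σ → γ) :
    Prop :=
  ∀ a b c, (∃ s, 0 < P s ∧ f s = a) → (∃ s, 0 < P s ∧ g s = b) → (∃ s, 0 < P s ∧ h s = c) →
    condPr P (fun s => f s = a ∧ g s = b) (fun s => h s = c) =
      condPr P (fun s => f s = a) (fun s => h s = c) *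
        condPr P (fun s => g s = b) (fun s => h s = c)

/-- Probabilistic dependence atom dep(x̄,ȳ): for every value of x̄ in the support
there is a value of ȳ with conditional probability 1. -/
def pDep {σ α β : Type*} [Fintype σ] (P : σ → ℝ) (f : σ → α) (g : σ → β) : Prop :=
  ∀ a, (∃ s, 0 < P s ∧ f s = a) → ∃ b, condPr P (fun s => g s = b) (fun s => f s = a) = 1

/-- Relational dependence atom dep(x̄,ȳ): agreement on `f` implies agreement on `g`. -/
def relDep {σ α β : Type*} (X : Set σ) (f : σ → α) (g : σ → β) : Prop :=
  ∀ s ∈ X, ∀ s' ∈ X, f s = f s' → g s = g s'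

/-- Relational conditional independence atom x̄ ⊥_z̄ ȳ, where `f,g,h` extract the
values of x̄, ȳ, z̄ from an assignment. -/
def relIndep {σ α β γ : Type*} (X : Set σ) (f : σ → α) (g : σ → β) (h : σ → γ) : Prop :=
  ∀ s ∈ X, ∀ s' ∈ X, h s = h s' →
    ∃ s'' ∈ X, h s'' = h s ∧ f s'' = f s ∧ g s'' = g s'

section Support

variable {σ : Type*} [Fintype σ] {P : σ → ℝ}

lemma pr_pos_iff (hP : ∀ s, 0 ≤ P s) (E : σ → Prop) :
    0 < pr P E ↔ ∃ s, 0 < P s ∧ E s := by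
  classical
  rw [pr, Finset.sum_pos_iff_of_nonneg fun s _ => by split_ifs <;> simp [hP s]]
  simp only [Finset.mem_univ, true_and]
  refine exists_congr fun s => ?_
  split_ifs with hE <;> simp [hE]

lemma condPr_pos_iff (hP : ∀ s, 0 ≤ P s) {E C : σ → Prop} (hC : ∃ s, 0 < P s ∧ C s) :
    0 < condPr P E C ↔ ∃ s, 0 < P s ∧ E s ∧ C s := by
  rw [condPr, div_pos_iff_of_pos_right ((pr_pos_iff hP C).2 hC), pr_pos_iff hP]

theorem relIndep_support_of_pIndep {α β γ : Type*} (hP : ∀ s, 0 ≤ P s)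
    {f : σ → α} {g : σ → β} {h : σ → γ} (hind : pIndep P f g h) :
    relIndep {s | 0 < P s} f g h := by
  intro s hs s' hs' hss'
  have hC : ∃ t, 0 < P t ∧ h t = h s := ⟨s, hs, rfl⟩
  have hjoint : 0 < condPr P (fun t => f t = f s ∧ g t = g s') (fun t => h t = h s) := by
    rw [hind (f s) (g s') (h s) ⟨s, hs, rfl⟩ ⟨s', hs', rfl⟩ hC]
    exact mul_pos ((condPr_pos_iff hP hC).2 ⟨s, hs, rfl, rfl⟩)
      ((condPr_pos_iff hP hC).2 ⟨s', hs', rfl, hss'.symm⟩)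
  obtain ⟨t, ht, ⟨hft, hgt⟩, hht⟩ := (condPr_pos_iff hP hC).1 hjoint
  exact ⟨t, ht, hht, hft, hgt⟩

end Support

theorem stmt0_general {V A : Type*} [Fintype V] [DecidableEq V] [Fintype A]
    {k l m : ℕ} (x : Fin k → V) (y : Fin l → V) (z : Fin m → V)
    (P : (V → A) → ℝ) (hpos : ∀ s, 0 ≤ P s)
    (hind : pIndep P (fun s => fun i => s (x i)) (fun s => fun i => s (y i))
      (fun s => fun i => s (z i))) :
    relIndep {s | 0 < P s} (fun s => fun i => s (x i)) (fun s => fun i => s (y i))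
      (fun s => fun i => s (z i)) :=
  relIndep_support_of_pIndep hpos hind

/-- If a probabilistic team satisfies x̄ ⊥_z̄ ȳ in probabilistic team semantics,
then its support team satisfies x̄ ⊥_z̄ ȳ in relational team semantics. -/
theorem stmt0 {V A : Type*} [Fintype V] [DecidableEq V] [Fintype A]
    {k l m : ℕ} (x : Fin k → V) (y : Fin l → V) (z : Fin m → V)
    (P : (V → A) → ℝ) (hpos : ∀ s, 0 ≤ P s) (hsum : ∑ s, P s = 1)
    (hind : pIndep P (fun s => fun i => s (x i)) (fun s => fun i => s (y i))
      (fun s => fun i => s (z i))) :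
    relIndep {s | 0 < P s} (fun s => fun i => s (x i)) (fun s => fun i => s (y i))
      (fun s => fun i => s (z i)) :=
  stmt0_general x y z P hpos hind
end

section
/- Relationally, the formula z ⊥_x w ∧ z ⊥_y w ∧ x ⊥_{wz} y entails z ⊥_{xy} w: every relational team satisfying the three independence atoms on the left also satisfies z ⊥_{xy} w. -/
theorem relIndep_prod_of_relIndep_of_relIndep {σ α β γ δ : Type*} {X : Set σ}
    {x : σ → α} {y : σ → β} {z : σ → γ} {w : σ → δ}
    (hx : relIndep X z w x) (hy : relIndep X z w y)
    (hxy : relIndep X x y (fun s => (w s, z s))) :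
    relIndep X z w (fun s => (x s, y s)) := by
  intro s hs s' hs' hxy_eq
  obtain ⟨hx_eq, hy_eq⟩ := Prod.mk.inj hxy_eq
  obtain ⟨t, ht, htx, htz, htw⟩ := hx s hs s' hs' hx_eq
  obtain ⟨r, hr, hry, hrz, hrw⟩ := hy s hs s' hs' hy_eq
  have htr : (w t, z t) = (w r, z r) := by rw [htw, htz, hrw, hrz]
  obtain ⟨u, hu, huwz, hux, huy⟩ := hxy t ht r hr htr
  obtain ⟨huw, huz⟩ := Prod.mk.inj huwz
  exact ⟨u, hu, Prod.ext (hux.trans htx) (huy.trans hry), huz.trans htz, huw.trans htw⟩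

/-- Relationally, z ⊥_x w ∧ z ⊥_y w ∧ x ⊥_{wz} y entails z ⊥_{xy} w,
for every team over variables (x,y,z,w) = coordinates 0,1,2,3. -/
theorem stmt4 {A : Type*} (X : Set (Fin 4 → A))
    (h1 : relIndep X (fun s => s 2) (fun s => s 3) (fun s => s 0))
    (h2 : relIndep X (fun s => s 2) (fun s => s 3) (fun s => s 1))
    (h3 : relIndep X (fun s => s 0) (fun s => s 1) (fun s => (s 3, s 2))) :
    relIndep X (fun s => s 2) (fun s => s 3) (fun s => (s 0, s 1)) :=
  relIndep_prod_of_relIndep_of_relIndep h1 h2 h3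
end

section
/- Strong Determinism is relationally equivalent to the conjunction of Weak Determinism and Parameter Independence: a relational team X over (m̄, ō, λ) satisfies ⋀ᵢ dep(mᵢλ, oᵢ) if and only if it satisfies dep(m̄λ, ō) and ⋀ᵢ oᵢ ⊥_{mᵢλ} m̄₋ᵢ. -/
section

variable {σ α β γ : Type*} {X : Set σ}

theorem relDep_comp (f : σ → α) (k : α → β) : relDep X f (fun s => k (f s)) :=
  fun _ _ _ _ h => congrArg k h

theorem relDep.trans {f : σ → α} {g : σ → β} {k : σ → γ} (hfg : relDep X f g)
    (hgk : relDep X g k) : relDep X f k :=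
  fun s hs s' hs' h => hgk s hs s' hs' (hfg s hs s' hs' h)

theorem relDep_pi_iff {ι : Type*} {β : ι → Type*} {f : σ → α} {g : σ → ∀ i, β i} :
    relDep X f g ↔ ∀ i, relDep X f (fun s => g s i) :=
  ⟨fun h i s hs s' hs' hf => congrFun (h s hs s' hs' hf) i,
    fun h s hs s' hs' hf => funext fun i => h i s hs s' hs' hf⟩

theorem relIndep_of_relDep {f : σ → α} {h : σ → γ} (g : σ → β) (hdep : relDep X h f) :
    relIndep X f g h :=
  fun s hs s' hs' hh => ⟨s', hs', hh.symm, (hdep s hs s' hs' hh).symm, rfl⟩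

theorem relIndep.relDep {f : σ → α} {g : σ → β} {h : σ → γ} (hind : relIndep X f g h)
    (hdep : relDep X (fun s => (g s, h s)) f) : relDep X h f := by
  intro s hs s' hs' hh
  obtain ⟨s'', hs'', hh'', hf'', hg''⟩ := hind s hs s' hs' hh
  calc f s = f s'' := hf''.symm
    _ = f s' := hdep s'' hs'' s' hs' (Prod.ext hg'' (hh''.trans hh))

end

theorem relDep_restrict_ne {n : ℕ} {M O L : Type*} (X : Set ((Fin n → M) × (Fin n → O) × L))
    (i : Fin n) :
    relDep X (fun s => ((fun j : {j : Fin n // j ≠ i} => s.1 j.1), (s.1 i, s.2.2)))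
      (fun s => (s.1, s.2.2)) := by
  intro s _ s' _ h
  simp only [Prod.mk.injEq, funext_iff, Subtype.forall] at h ⊢
  obtain ⟨hne, hi, hl⟩ := h
  refine ⟨fun j => ?_, hl⟩
  by_cases hj : j = i
  · exact hj ▸ hi
  · exact hne j hj

/-- Strong Determinism is relationally equivalent to Weak Determinism together with
Parameter Independence. -/
theorem stmt7 {n : ℕ} {M O L : Type*}
    (X : Set ((Fin n → M) × (Fin n → O) × L)) :
    (∀ i : Fin n, relDep X (fun s => (s.1 i, s.2.2)) (fun s => s.2.1 i)) ↔
      (relDep X (fun s => (s.1, s.2.2)) (fun s => s.2.1) ∧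
        ∀ i : Fin n,
          relIndep X (fun s => s.2.1 i) (fun s => fun j : {j : Fin n // j ≠ i} => s.1 j.1)
            (fun s => (s.1 i, s.2.2))) := by
  constructor
  · intro hSD
    exact ⟨relDep_pi_iff.2 fun i => (relDep_comp _ fun p => (p.1 i, p.2)).trans (hSD i),
      fun i => relIndep_of_relDep _ (hSD i)⟩
  · rintro ⟨hWD, hPI⟩ i
    exact (hPI i).relDep ((relDep_restrict_ne X i).trans (relDep_pi_iff.1 hWD i))
end

section
/- Strong Determinism implies Parameter Independence for probabilistic hidden-variable models: if a probabilistic team over (m̄, ō, λ) satisfies ⋀ᵢ dep(mᵢλ, oᵢ) in probabilistic semantics, then for every i it satisfies oᵢ ⊥_{mᵢλ} m̄₋ᵢ. -/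
section WeightedEvents

variable {σ : Type*} [Fintype σ] {P : σ → ℝ}

theorem pr_congr_of_support (hpos : ∀ s, 0 ≤ P s) {E F : σ → Prop}
    (h : ∀ s, 0 < P s → (E s ↔ F s)) : pr P E = pr P F := by
  refine Finset.sum_congr rfl fun s _ => ?_
  rcases (hpos s).lt_or_eq with hs | hs
  · classical exact if_congr (h s hs) rfl rfl
  · split_ifs <;> simp [← hs]

theorem pr_eq_zero_of_support (hpos : ∀ s, 0 ≤ P s) {E : σ → Prop}
    (h : ∀ s, 0 < P s → ¬E s) : pr P E = 0 := by
  rw [pr_congr_of_support hpos (F := fun _ => False) fun s hs => iff_false_intro (h s hs)]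
  simp [pr]

theorem pr_and_add_pr_not_and (P : σ → ℝ) (E C : σ → Prop) :
    pr P (fun s => E s ∧ C s) + pr P (fun s => ¬E s ∧ C s) = pr P C := by
  rw [pr, pr, pr, ← Finset.sum_add_distrib]
  refine Finset.sum_congr rfl fun s _ => ?_
  by_cases hE : E s <;> by_cases hC : C s <;> simp [hE, hC]

theorem forall_of_condPr_eq_one (hpos : ∀ s, 0 ≤ P s) {E C : σ → Prop}
    (h : condPr P E C = 1) : ∀ s, 0 < P s → C s → E s := by
  have hC : pr P C ≠ 0 := fun h0 => by simp [condPr, h0] at h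
  have hnot : pr P (fun s => ¬E s ∧ C s) = 0 := by
    rw [condPr, div_eq_one_iff_eq hC] at h
    linarith [pr_and_add_pr_not_and P E C]
  rw [pr, Finset.sum_eq_zero_iff_of_nonneg fun t _ => by split_ifs <;> simp [hpos t]] at hnot
  intro s hs hCs
  by_contra hEs
  have := hnot s (Finset.mem_univ s)
  rw [if_pos ⟨hEs, hCs⟩] at this
  exact hs.ne' this

theorem condPr_and_eq_mul_of_forall (hpos : ∀ s, 0 ≤ P s) {E F C : σ → Prop}
    (hE : ∀ s, 0 < P s → C s → E s) :
    condPr P (fun s => E s ∧ F s) C = condPr P E C * condPr P F C := by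
  have hEC : pr P (fun s => E s ∧ C s) = pr P C :=
    pr_congr_of_support hpos fun s hs => ⟨And.right, fun hC => ⟨hE s hs hC, hC⟩⟩
  have hEFC : pr P (fun s => (E s ∧ F s) ∧ C s) = pr P (fun s => F s ∧ C s) :=
    pr_congr_of_support hpos fun s hs =>
      ⟨fun h => ⟨h.1.2, h.2⟩, fun h => ⟨⟨hE s hs h.2, h.1⟩, h.2⟩⟩
  rcases eq_or_ne (pr P C) 0 with hC | hC
  · simp [condPr, hC]
  · rw [condPr, condPr, condPr, hEC, hEFC, div_self hC, one_mul]

theorem condPr_and_eq_mul_of_forall_not (hpos : ∀ s, 0 ≤ P s) {E F C : σ → Prop}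
    (hE : ∀ s, 0 < P s → C s → ¬E s) :
    condPr P (fun s => E s ∧ F s) C = condPr P E C * condPr P F C := by
  rw [condPr, condPr,
    pr_eq_zero_of_support (E := fun s => (E s ∧ F s) ∧ C s) hpos fun s hs h => hE s hs h.2 h.1.1,
    pr_eq_zero_of_support (E := fun s => E s ∧ C s) hpos fun s hs h => hE s hs h.2 h.1]
  simp

end WeightedEvents

theorem pIndep_of_pDep {σ α β γ : Type*} [Fintype σ] {P : σ → ℝ} (hpos : ∀ s, 0 ≤ P s)
    {f : σ → α} (g : σ → β) {h : σ → γ} (hdep : pDep P h f) : pIndep P f g h := by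
  intro a b c _ _ hc
  obtain ⟨a₀, ha₀⟩ := hdep c hc
  have hdet := forall_of_condPr_eq_one hpos ha₀
  by_cases ha : a = a₀
  · subst ha
    exact condPr_and_eq_mul_of_forall hpos hdet
  · exact condPr_and_eq_mul_of_forall_not hpos fun s hs hCs hfs => ha (hfs ▸ hdet s hs hCs)

theorem stmt8_general {n : ℕ} {M O L : Type*} [Fintype M] [Fintype O] [Fintype L]
    (P : (Fin n → M) × (Fin n → O) × L → ℝ)
    (hpos : ∀ s, 0 ≤ P s)
    (hsd : ∀ i : Fin n, pDep P (fun s => (s.1 i, s.2.2)) (fun s => s.2.1 i)) :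
    ∀ i : Fin n,
      pIndep P (fun s => s.2.1 i) (fun s => fun j : {j : Fin n // j ≠ i} => s.1 j.1)
        (fun s => (s.1 i, s.2.2)) :=
  fun i => pIndep_of_pDep hpos _ (hsd i)

/-- Strong Determinism implies Parameter Independence for probabilistic
hidden-variable models. -/
theorem stmt8 {n : ℕ} {M O L : Type*} [Fintype M] [Fintype O] [Fintype L]
    (P : (Fin n → M) × (Fin n → O) × L → ℝ)
    (hpos : ∀ s, 0 ≤ P s) (hsum : ∑ s, P s = 1)
    (hsd : ∀ i : Fin n, pDep P (fun s => (s.1 i, s.2.2)) (fun s => s.2.1 i)) :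
    ∀ i : Fin n,
      pIndep P (fun s => s.2.1 i) (fun s => fun j : {j : Fin n // j ≠ i} => s.1 j.1)
        (fun s => (s.1 i, s.2.2)) :=
  stmt8_general P hpos hsd
end

section
/- Relationally, Parameter Independence and λ-Independence entail No-Signalling: if a relational team X over (m̄, ō, λ) satisfies m̄ ⊥ λ and ⋀ᵢ oᵢ ⊥_{mᵢλ} m̄₋ᵢ, then X satisfies ⋀ᵢ oᵢ ⊥_{mᵢ} m̄₋ᵢ. -/
/-!
Given `s, s'` agreeing on `mᵢ`, λ-independence yields `t` with the measurements of `s'` and the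
hidden variable of `s`. Then `s` and `t` agree on `(mᵢ, λ)`, so parameter independence yields
`u` with the outcome `oᵢ` of `s` and the remaining measurements `m̄₋ᵢ` of `t`, i.e. of `s'`.
-/

theorem relIndep_comp_of_hidden_indep {σ A L α β γ : Type*} {X : Set σ} {m : σ → A}
    {lam : σ → L} {x : σ → α} {z : A → γ} {y : A → β}
    (hli : relIndep X m lam (fun _ => ()))
    (hpi : relIndep X x (y ∘ m) (fun s => (z (m s), lam s))) :
    relIndep X x (y ∘ m) (z ∘ m) := by
  intro s hs s' hs' hz
  obtain ⟨t, ht, -, htm, htl⟩ := hli s' hs' s hs rfl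
  have hst : (z (m s), lam s) = (z (m t), lam t) := by
    rw [htm, htl]
    exact Prod.ext hz rfl
  obtain ⟨u, hu, hus, hux, huy⟩ := hpi s hs t ht hst
  refine ⟨u, hu, congrArg Prod.fst hus, hux, ?_⟩
  simp only [Function.comp_apply] at huy ⊢
  rw [huy, htm]

/-- Relationally, Parameter Independence and λ-Independence entail No-Signalling. -/
theorem stmt9 {n : ℕ} {M O L : Type*}
    (X : Set ((Fin n → M) × (Fin n → O) × L))
    (hli : relIndep X (fun s => s.1) (fun s => s.2.2) (fun _ => ()))
    (hpi : ∀ i : Fin n,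
      relIndep X (fun s => s.2.1 i) (fun s => fun j : {j : Fin n // j ≠ i} => s.1 j.1)
        (fun s => (s.1 i, s.2.2))) :
    ∀ i : Fin n,
      relIndep X (fun s => s.2.1 i) (fun s => fun j : {j : Fin n // j ≠ i} => s.1 j.1)
        (fun s => s.1 i) := fun i =>
  relIndep_comp_of_hidden_indep (z := fun m => m i)
    (y := fun m (j : {j : Fin n // j ≠ i}) => m j) hli (hpi i)
end

section
/- Probabilistically, Parameter Independence and λ-Independence entail No-Signalling: if a probabilistic team over (m̄, ō, λ) satisfies m̄ ⊥ λ and oᵢ ⊥_{mᵢλ} m̄₋ᵢ for all i, then for all i and all values o, ā in the support, P(oᵢ = o | m̄ = ā) = P(oᵢ = o | mᵢ = aᵢ). -/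
/-!
With q(c) = P(oᵢ = o | mᵢ = aᵢ, λ = c), parameter independence gives
P(oᵢ = o, m̄ = ā, λ = c) = q(c) · P(m̄ = ā, λ = c), while trivially
P(oᵢ = o, mᵢ = aᵢ, λ = c) = q(c) · P(mᵢ = aᵢ, λ = c). By λ-independence, which passes from m̄
to mᵢ by marginalising, the right-hand sides are q(c) · P(m̄ = ā) · P(λ = c) and
q(c) · P(mᵢ = aᵢ) · P(λ = c). Summing over c, both conditional probabilities equal
∑_c q(c) · P(λ = c).
-/

section

variable {σ α β γ : Type*} [Fintype σ] {P : σ → ℝ}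

variable (P) in
lemma pr_congr {E F : σ → Prop} (h : ∀ s, E s ↔ F s) : pr P E = pr P F := by
  rw [funext fun s => propext (h s)]

lemma pr_nonneg (hpos : ∀ s, 0 ≤ P s) (E : σ → Prop) : 0 ≤ pr P E :=
  Finset.sum_nonneg fun s _ => by split <;> simp [hpos s]

lemma pr_mono (hpos : ∀ s, 0 ≤ P s) {E F : σ → Prop} (h : ∀ s, E s → F s) :
    pr P E ≤ pr P F :=
  Finset.sum_le_sum fun s _ => by
    by_cases hE : E s
    · simp [hE, h s hE]
    · simp only [hE, if_false]; split <;> simp [hpos s]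

lemma pr_pos (hpos : ∀ s, 0 ≤ P s) {E : σ → Prop} (h : ∃ s, 0 < P s ∧ E s) :
    0 < pr P E := by
  classical
  obtain ⟨s, hs, hE⟩ := h
  calc 0 < P s := hs
    _ = if E s then P s else 0 := (if_pos hE).symm
    _ ≤ pr P E := Finset.single_le_sum (f := fun s => if E s then P s else 0)
        (fun t _ => by split <;> simp [hpos t]) (Finset.mem_univ s)

lemma pr_eq_zero_of_forall (hpos : ∀ s, 0 ≤ P s) {E : σ → Prop}
    (h : ∀ s, 0 < P s → ¬ E s) : pr P E = 0 :=
  Finset.sum_eq_zero fun s _ => by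
    by_cases hE : E s
    · simp only [hE, if_true]
      exact le_antisymm (not_lt.mp fun hs => h s hs hE) (hpos s)
    · simp [hE]

variable (P) in
lemma pr_eq_sum_pr_and [Fintype α] (E : σ → Prop) (f : σ → α) :
    pr P E = ∑ a, pr P (fun s => E s ∧ f s = a) := by
  classical
  simp only [pr]
  rw [Finset.sum_comm]
  refine Finset.sum_congr rfl fun s _ => ?_
  by_cases hE : E s <;> simp [hE]

lemma pr_and_eq_condPr_mul (hpos : ∀ s, 0 ≤ P s) (E C : σ → Prop) :
    pr P (fun s => E s ∧ C s) = condPr P E C * pr P C := by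
  by_cases hC : pr P C = 0
  · rw [hC, mul_zero]
    exact le_antisymm (hC ▸ pr_mono hpos fun s h => h.2) (pr_nonneg hpos _)
  · rw [condPr, div_mul_cancel₀ _ hC]


lemma pIndep.pr_and_and {f : σ → α} {g : σ → β} {k : σ → γ} (hind : pIndep P f g k)
    (hpos : ∀ s, 0 ≤ P s) {a : α} (ha : ∃ s, 0 < P s ∧ f s = a) (b : β) (c : γ) :
    pr P (fun s => f s = a ∧ g s = b ∧ k s = c) =
      condPr P (fun s => f s = a) (fun s => k s = c) * pr P (fun s => g s = b ∧ k s = c) := by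
  by_cases hb : ∃ s, 0 < P s ∧ g s = b
  · by_cases hc : ∃ s, 0 < P s ∧ k s = c
    · have hkc := (pr_pos hpos hc).ne'
      have key := hind a b c ha hb hc
      rw [condPr, div_eq_iff hkc] at key
      rw [pr_congr P fun s => and_assoc.symm, key, mul_assoc, ← pr_and_eq_condPr_mul hpos]
    · push Not at hc
      have hc' (E : σ → Prop) : pr P (fun s => E s ∧ k s = c) = 0 :=
        pr_eq_zero_of_forall hpos fun s hs h => (hc s hs).elim h.2
      rw [pr_congr P fun s => and_assoc.symm, hc', hc', mul_zero]
  · push Not at hb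
    rw [pr_eq_zero_of_forall hpos fun s hs h => hb s hs h.2.1,
      pr_eq_zero_of_forall hpos fun s hs h => hb s hs h.1, mul_zero]

variable (P) in
lemma pr_comp_and_eq_sum [Fintype α] (f : σ → α) (Q : α → Prop) [DecidablePred Q]
    (E : σ → Prop) :
    pr P (fun s => Q (f s) ∧ E s) = ∑ a with Q a, pr P (fun s => f s = a ∧ E s) := by
  classical
  simp only [pr]
  rw [Finset.sum_comm]
  refine Finset.sum_congr rfl fun s _ => ?_
  by_cases hQ : Q (f s) <;> by_cases hE : E s <;> simp [hQ, hE]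

lemma pr_comp_and_eq_mul [Fintype α] {f : σ → α} {k : σ → γ}
    (hind : ∀ a c, pr P (fun s => f s = a ∧ k s = c) =
      pr P (fun s => f s = a) * pr P (fun s => k s = c))
    (Q : α → Prop) (c : γ) :
    pr P (fun s => Q (f s) ∧ k s = c) = pr P (fun s => Q (f s)) * pr P (fun s => k s = c) := by
  classical
  rw [pr_congr P (E := fun s => Q (f s)) fun s => (and_iff_left trivial).symm,
    pr_comp_and_eq_sum, pr_comp_and_eq_sum, Finset.sum_mul]
  refine Finset.sum_congr rfl fun a _ => ?_
  rw [hind, pr_congr P fun s => and_iff_left trivial]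

lemma condPr_eq_sum_of_pr_and_and [Fintype γ] {E A : σ → Prop} {k : σ → γ} (w : γ → ℝ)
    (h : ∀ c, pr P (fun s => E s ∧ A s ∧ k s = c) = w c * pr P A * pr P (fun s => k s = c))
    (hA : pr P A ≠ 0) :
    condPr P E A = ∑ c, w c * pr P (fun s => k s = c) := by
  rw [condPr, pr_eq_sum_pr_and P _ k, div_eq_iff hA, Finset.sum_mul]
  refine Finset.sum_congr rfl fun c _ => ?_
  rw [pr_congr P fun s => and_assoc, h]
  ring

end

lemma fun_eq_iff_restrict_and_apply {ι X : Type*} (x y : ι → X) (i : ι) :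
    x = y ↔ (fun j : {j // j ≠ i} => x j) = (fun j : {j // j ≠ i} => y j) ∧ x i = y i := by
  refine ⟨fun h => h ▸ ⟨rfl, rfl⟩, fun ⟨h, hi⟩ => funext fun j => ?_⟩
  by_cases hj : j = i
  · exact hj ▸ hi
  · exact congrFun h ⟨j, hj⟩

theorem stmt10_general {n : ℕ} {M O L : Type*} [Fintype M] [Fintype O] [Fintype L]
    (P : (Fin n → M) × (Fin n → O) × L → ℝ)
    (hpos : ∀ s, 0 ≤ P s)
    (hli : ∀ (a : Fin n → M) (c : L),
      pr P (fun s => s.1 = a ∧ s.2.2 = c) =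
        pr P (fun s => s.1 = a) * pr P (fun s => s.2.2 = c))
    (hpi : ∀ i : Fin n,
      pIndep P (fun s => s.2.1 i) (fun s => fun j : {j : Fin n // j ≠ i} => s.1 j.1)
        (fun s => (s.1 i, s.2.2))) :
    ∀ (i : Fin n) (o : O) (a : Fin n → M),
      (∃ s, 0 < P s ∧ s.2.1 i = o) → (∃ s, 0 < P s ∧ s.1 = a) →
      condPr P (fun s => s.2.1 i = o) (fun s => s.1 = a) =
        condPr P (fun s => s.2.1 i = o) (fun s => s.1 i = a i) := by
  intro i o a ho ha
  set q : L → ℝ := fun c =>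
    condPr P (fun s => s.2.1 i = o) (fun s => (s.1 i, s.2.2) = (a i, c))
  have hfull (c : L) : pr P (fun s => s.2.1 i = o ∧ s.1 = a ∧ s.2.2 = c) =
      q c * pr P (fun s => s.1 = a) * pr P (fun s => s.2.2 = c) := by
    have hsplit (s : (Fin n → M) × (Fin n → O) × L) : s.1 = a ∧ s.2.2 = c ↔
        (fun j : {j // j ≠ i} => s.1 j) = (fun j : {j // j ≠ i} => a j) ∧
          (s.1 i, s.2.2) = (a i, c) := by
      rw [fun_eq_iff_restrict_and_apply _ _ i, Prod.mk_inj, and_assoc]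
    rw [pr_congr P fun s => and_congr_right' (hsplit s), (hpi i).pr_and_and hpos ho,
      ← pr_congr P hsplit, hli, mul_assoc]
  have hcoord (c : L) : pr P (fun s => s.2.1 i = o ∧ s.1 i = a i ∧ s.2.2 = c) =
      q c * pr P (fun s => s.1 i = a i) * pr P (fun s => s.2.2 = c) := by
    have hpair (s : (Fin n → M) × (Fin n → O) × L) :
        s.1 i = a i ∧ s.2.2 = c ↔ (s.1 i, s.2.2) = (a i, c) := Prod.mk_inj.symm
    rw [pr_congr P fun s => and_congr_right' (hpair s), pr_and_eq_condPr_mul hpos,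
      ← pr_congr P hpair, pr_comp_and_eq_mul hli (fun x => x i = a i), mul_assoc]
  have hA : pr P (fun s => s.1 = a) ≠ 0 := (pr_pos hpos ha).ne'
  have hAi : pr P (fun s => s.1 i = a i) ≠ 0 :=
    (pr_pos hpos (ha.imp fun s h => ⟨h.1, congrFun h.2 i⟩)).ne'
  rw [condPr_eq_sum_of_pr_and_and q hfull hA, condPr_eq_sum_of_pr_and_and q hcoord hAi]

/-- Probabilistically, Parameter Independence and λ-Independence entail
No-Signalling: P(oᵢ = o | m̄ = ā) = P(oᵢ = o | mᵢ = aᵢ) for values in the support. -/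
theorem stmt10 {n : ℕ} {M O L : Type*} [Fintype M] [Fintype O] [Fintype L]
    (P : (Fin n → M) × (Fin n → O) × L → ℝ)
    (hpos : ∀ s, 0 ≤ P s) (hsum : ∑ s, P s = 1)
    (hli : ∀ (a : Fin n → M) (c : L),
      pr P (fun s => s.1 = a ∧ s.2.2 = c) =
        pr P (fun s => s.1 = a) * pr P (fun s => s.2.2 = c))
    (hpi : ∀ i : Fin n,
      pIndep P (fun s => s.2.1 i) (fun s => fun j : {j : Fin n // j ≠ i} => s.1 j.1)
        (fun s => (s.1 i, s.2.2))) :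
    ∀ (i : Fin n) (o : O) (a : Fin n → M),
      (∃ s, 0 < P s ∧ s.2.1 i = o) → (∃ s, 0 < P s ∧ s.1 = a) →
      condPr P (fun s => s.2.1 i = o) (fun s => s.1 = a) =
        condPr P (fun s => s.2.1 i = o) (fun s => s.1 i = a i) :=
  stmt10_general P hpos hli hpi
end

section
/- Semantic characterization of relational Locality: a relational team X over (m̄, ō, λ) satisfies Outcome Independence (⋀ᵢ oᵢ ⊥_{m̄λ} ō₋ᵢ) and Parameter Independence (⋀ᵢ oᵢ ⊥_{mᵢλ} m̄₋ᵢ) if and only if for every (ā, c) ∈ X(m̄, λ) and all b₁,...,bₙ with bᵢ ∈ X(oᵢ): whenever for each i there exists sᵢ ∈ X with sᵢ(mᵢ, oᵢ, λ) = (aᵢ, bᵢ, c), there exists s ∈ X with s(m̄, ō, λ) = (ā, b̄, c). -/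
open Function

section

variable {ι M O L : Type*}

theorem mem_of_forall_update_mem [Finite ι] [DecidableEq ι] {F : Set (ι → O)}
    (hF : F.Nonempty) (hupdate : ∀ i, ∀ o ∈ F, ∀ o' ∈ F, update o' i (o i) ∈ F)
    {b : ι → O} (hb : ∀ i, ∃ o ∈ F, o i = b i) : b ∈ F := by
  have := Fintype.ofFinite ι
  suffices h : ∀ S : Finset ι, ∃ o ∈ F, ∀ i ∈ S, o i = b i by
    obtain ⟨o, ho, hob⟩ := h Finset.univ
    rwa [← funext fun i => hob i (Finset.mem_univ i)]
  intro S
  induction S using Finset.induction_on with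
  | empty =>
    obtain ⟨o, ho⟩ := hF
    exact ⟨o, ho, by simp⟩
  | insert i S _ ih =>
    obtain ⟨o, ho, hob⟩ := ih
    obtain ⟨o', ho', hi⟩ := hb i
    refine ⟨update o i (o' i), hupdate i o' ho' o ho, fun j hj => ?_⟩
    rcases eq_or_ne j i with rfl | hji
    · simpa using hi
    · simpa [hji] using hob j ((Finset.mem_insert.1 hj).resolve_left hji)

theorem eq_update_iff_apply_and_restrict {α : Type*} [DecidableEq ι] {v w : ι → α} {i : ι}
    {x : α} : v = update w i x ↔
      v i = x ∧ (fun j : {j : ι // j ≠ i} => v j) = fun j : {j : ι // j ≠ i} => w j := by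
  rw [eq_update_iff]
  simp [funext_iff]

variable (X : Set ((ι → M) × (ι → O) × L))

def OutcomeIndependence : Prop :=
  ∀ i : ι, relIndep X (fun s => s.2.1 i) (fun s => fun j : {j : ι // j ≠ i} => s.2.1 j.1)
    (fun s => (s.1, s.2.2))

def ParameterIndependence : Prop :=
  ∀ i : ι, relIndep X (fun s => s.2.1 i) (fun s => fun j : {j : ι // j ≠ i} => s.1 j.1)
    (fun s => (s.1 i, s.2.2))

def GluesLocalRealizations : Prop :=
  ∀ (a : ι → M) (c : L) (b : ι → O), (∃ s ∈ X, s.1 = a ∧ s.2.2 = c) →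
    (∀ i, ∃ s ∈ X, s.1 i = a i ∧ s.2.1 i = b i ∧ s.2.2 = c) → (a, b, c) ∈ X

variable {X}

theorem outcomeIndependence_iff [DecidableEq ι] :
    OutcomeIndependence X ↔ ∀ i, ∀ s ∈ X, ∀ s' ∈ X, s.1 = s'.1 → s.2.2 = s'.2.2 →
      (s.1, update s'.2.1 i (s.2.1 i), s.2.2) ∈ X := by
  refine forall_congr' fun i => forall₂_congr fun s _ => forall₂_congr fun s' _ => ?_
  rw [Prod.mk.injEq, and_imp]
  refine imp_congr_right fun _ => imp_congr_right fun _ => Iff.trans ?_ exists_eq_right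
  refine exists_congr fun u => and_congr_right fun _ => ?_
  simp only [Prod.ext_iff, eq_update_iff_apply_and_restrict]
  tauto

theorem parameterIndependence_iff :
    ParameterIndependence X ↔ ∀ i, ∀ s ∈ X, ∀ s' ∈ X, s.1 i = s'.1 i → s.2.2 = s'.2.2 →
      ∃ u ∈ X, u.1 = s'.1 ∧ u.2.1 i = s.2.1 i ∧ u.2.2 = s.2.2 := by
  classical
  refine forall_congr' fun i => forall₂_congr fun s _ => forall₂_congr fun s' _ => ?_
  rw [Prod.mk.injEq, and_imp]
  refine imp_congr_right fun hm => imp_congr_right fun _ =>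
    exists_congr fun u => and_congr_right fun _ => ?_
  have hu : u.1 = s'.1 ↔ u.1 i = s.1 i ∧
      (fun j : {j : ι // j ≠ i} => u.1 j) = fun j : {j : ι // j ≠ i} => s'.1 j := by
    rw [← eq_update_iff_apply_and_restrict, hm, update_eq_self]
  rw [hu, Prod.mk.injEq]
  dsimp only
  tauto

theorem OutcomeIndependence.gluesLocalRealizations [Finite ι] (hOI : OutcomeIndependence X)
    (hPI : ParameterIndependence X) : GluesLocalRealizations X := by
  classical
  rintro a c b ⟨s₀, hs₀, ha, hc⟩ hlocal
  subst ha hc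
  refine mem_of_forall_update_mem (F := {o | (s₀.1, o, s₀.2.2) ∈ X}) ⟨s₀.2.1, hs₀⟩
    (fun i o ho o' ho' => outcomeIndependence_iff.1 hOI i _ ho _ ho' rfl rfl) fun i => ?_
  obtain ⟨s, hs, hai, hbi, hci⟩ := hlocal i
  obtain ⟨u, hu, hua, hui, huc⟩ := parameterIndependence_iff.1 hPI i s hs s₀ hs₀ hai hci
  refine ⟨u.2.1, ?_, hui.trans hbi⟩
  show (s₀.1, u.2.1, s₀.2.2) ∈ X
  rwa [← hua, ← hci, ← huc]

theorem GluesLocalRealizations.update_mem [DecidableEq ι] (hX : GluesLocalRealizations X)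
    {i : ι} {s s' : (ι → M) × (ι → O) × L} (hs : s ∈ X) (hs' : s' ∈ X) (hm : s.1 i = s'.1 i)
    (hc : s.2.2 = s'.2.2) : (s'.1, update s'.2.1 i (s.2.1 i), s.2.2) ∈ X := by
  refine hX _ _ _ ⟨s', hs', rfl, hc.symm⟩ fun j => ?_
  rcases eq_or_ne j i with rfl | hji
  · exact ⟨s, hs, hm, by simp, rfl⟩
  · exact ⟨s', hs', rfl, by simp [hji], hc.symm⟩

theorem GluesLocalRealizations.outcomeIndependence (hX : GluesLocalRealizations X) :
    OutcomeIndependence X := by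
  classical
  refine outcomeIndependence_iff.2 fun i s hs s' hs' hm hc => ?_
  simpa [hm] using hX.update_mem hs hs' (congrFun hm i) hc

theorem GluesLocalRealizations.parameterIndependence (hX : GluesLocalRealizations X) :
    ParameterIndependence X := by
  classical
  exact parameterIndependence_iff.2 fun i s hs s' hs' hm hc =>
    ⟨_, hX.update_mem hs hs' hm hc, rfl, by simp, rfl⟩

theorem locality_iff_gluesLocalRealizations [Finite ι] :
    OutcomeIndependence X ∧ ParameterIndependence X ↔ GluesLocalRealizations X :=
  ⟨fun h => h.1.gluesLocalRealizations h.2,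
    fun h => ⟨h.outcomeIndependence, h.parameterIndependence⟩⟩

end

/-- Semantic characterization of relational Locality: Outcome Independence together
with Parameter Independence holds iff condition (*) holds. -/
theorem stmt11 {n : ℕ} {M O L : Type*}
    (X : Set ((Fin n → M) × (Fin n → O) × L)) :
    ((∀ i : Fin n,
        relIndep X (fun s => s.2.1 i) (fun s => fun j : {j : Fin n // j ≠ i} => s.2.1 j.1)
          (fun s => (s.1, s.2.2))) ∧
      (∀ i : Fin n,
        relIndep X (fun s => s.2.1 i) (fun s => fun j : {j : Fin n // j ≠ i} => s.1 j.1)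
          (fun s => (s.1 i, s.2.2)))) ↔
      (∀ (a : Fin n → M) (c : L) (b : Fin n → O),
        (∃ s ∈ X, s.1 = a ∧ s.2.2 = c) →
        (∀ i, ∃ s ∈ X, s.2.1 i = b i) →
        (∀ i, ∃ s ∈ X, s.1 i = a i ∧ s.2.1 i = b i ∧ s.2.2 = c) →
        ∃ s ∈ X, s.1 = a ∧ s.2.1 = b ∧ s.2.2 = c) := by
  refine (locality_iff_gluesLocalRealizations (X := X)).trans
    ⟨fun h a c b hac _ hlocal => ⟨_, h a c b hac hlocal, rfl, rfl, rfl⟩,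
      fun h a c b hac hlocal => ?_⟩
  obtain ⟨s, hs, rfl, rfl, rfl⟩ :=
    h a c b hac (fun i => (hlocal i).imp fun _ ⟨hs, _, hb, _⟩ => ⟨hs, hb⟩) hlocal
  exact hs
end

section
/- Every relational empirical model admits an empirically equivalent hidden-variable model satisfying Strong Determinism: for every relational team X over (m̄, ō), there exists a finite set Λ and a relational team Y over (m̄, ō, λ) with values of λ in Λ such that the restriction of Y to (m̄, ō) equals X and Y satisfies ⋀ᵢ dep(mᵢλ, oᵢ). -/
/-!
Take the hidden variable to be a label enumerating the finitely many assignments of `X`, and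
let `Y` tag each assignment with its own label. Then `λ` alone determines the whole assignment,
so a fortiori `(mᵢ, λ)` determines `oᵢ`, while forgetting `λ` gives back `X`.
-/

theorem relDep.mono {σ α α' β β' : Type*} {X : Set σ} {f : σ → α} {g : σ → β}
    {f' : σ → α'} {g' : σ → β'} (h : relDep X f g)
    (hf : ∀ s s', f' s = f' s' → f s = f s') (hg : ∀ s s', g s = g s' → g' s = g' s') :
    relDep X f' g' :=
  fun s hs s' hs' hfs => hg s s' (h s hs s' hs' (hf s s' hfs))

theorem fst_image_range_tag {σ Λ : Type*} (X : Set σ) (e : X → Λ) :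
    Prod.fst '' Set.range (fun x : X => ((x : σ), e x)) = X := by
  rw [← Set.range_comp]
  exact Subtype.range_coe

theorem relDep_snd_fst_range_tag {σ Λ : Type*} {X : Set σ} {e : X → Λ}
    (he : Function.Injective e) :
    relDep (Set.range fun x : X => ((x : σ), e x)) Prod.snd Prod.fst := by
  rintro _ ⟨x, rfl⟩ _ ⟨x', rfl⟩ hx
  exact congrArg Subtype.val (he hx)

/-- Every relational empirical model admits an empirically equivalent
hidden-variable model satisfying Strong Determinism. -/
theorem stmt13 {n : ℕ} {M O : Type*}
    (X : Set ((Fin n → M) × (Fin n → O))) (hfin : X.Finite) :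
    ∃ (Λ : Type) (_ : Fintype Λ) (Y : Set (((Fin n → M) × (Fin n → O)) × Λ)),
      Prod.fst '' Y = X ∧
      ∀ i : Fin n, relDep Y (fun s => (s.1.1 i, s.2)) (fun s => s.1.2 i) := by
  have : Finite X := hfin
  let e := Finite.equivFin X
  refine ⟨Fin (Nat.card X), inferInstance, Set.range fun x : X => ((x : _), e x),
    fst_image_range_tag X e, fun i => ?_⟩
  exact (relDep_snd_fst_range_tag e.injective).mono
    (fun _ _ h => (Prod.ext_iff.1 h).2) (fun _ _ h => congrArg (fun o => o.2 i) h)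
end

section
/- Every relational empirical model admits an empirically equivalent hidden-variable model satisfying Weak Determinism and λ-Independence: for every finite relational team X over (m̄, ō) there exists a finite set Λ and a team Y over (m̄, ō, λ) restricting to X on (m̄, ō) such that Y ⊨ dep(m̄λ, ō) and Y ⊨ m̄ ⊥ λ. -/
namespace HiddenVariable

variable {A B Λ Λ' : Type*}

structure IsModel (X : Set (A × B)) (Y : Set ((A × B) × Λ)) : Prop where
  fst_image : Prod.fst '' Y = X
  weakDeterminism : relDep Y (fun s => (s.1.1, s.2)) (fun s => s.1.2)
  lambdaIndependence : relIndep Y (fun s => s.1.1) (fun s => s.2) (fun _ => ())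

theorem IsModel.image_prodMap {X : Set (A × B)} {Y : Set ((A × B) × Λ)} (hY : IsModel X Y)
    {e : Λ → Λ'} (he : e.Injective) : IsModel X (Prod.map id e '' Y) where
  fst_image := by rw [Set.image_image]; exact hY.fst_image
  weakDeterminism := by
    rintro _ ⟨s, hs, rfl⟩ _ ⟨s', hs', rfl⟩ h
    simp only [Prod.map, id, Prod.mk.injEq] at h
    exact hY.weakDeterminism s hs s' hs' (Prod.ext h.1 (he h.2))
  lambdaIndependence := by
    rintro _ ⟨s, hs, rfl⟩ _ ⟨s', hs', rfl⟩ -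
    obtain ⟨s'', hs'', -, hfst, hsnd⟩ := hY.lambdaIndependence s hs s' hs' rfl
    exact ⟨Prod.map id e s'', ⟨s'', hs'', rfl⟩, rfl, hfst, congrArg e hsnd⟩

def Section (X : Set (A × B)) : Type _ :=
  {g : Prod.fst '' X → X // ∀ a, (g a).1.1 = a}

instance (X : Set (A × B)) [Finite X] : Finite (Section X) :=
  Subtype.finite

theorem Section.exists_apply_eq {X : Set (A × B)} {z : A × B} (hz : z ∈ X) :
    ∃ g : Section X, g.1 ⟨z.1, Set.mem_image_of_mem _ hz⟩ = ⟨z, hz⟩ := by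
  classical
  let g : Prod.fst '' X → X := fun a =>
    if a.1 = z.1 then ⟨z, hz⟩ else ⟨a.2.choose, a.2.choose_spec.1⟩
  have hg : ∀ a, (g a).1.1 = a := by
    intro a
    by_cases h : a.1 = z.1
    · simp only [g, if_pos h]; exact h.symm
    · simp only [g, if_neg h]; exact a.2.choose_spec.2
  exact ⟨⟨g, hg⟩, by simp [g]⟩

def sectionTeam (X : Set (A × B)) : Set ((A × B) × Section X) :=
  Set.range fun q : Section X × Prod.fst '' X => ((q.1.1 q.2 : A × B), q.1)

theorem isModel_sectionTeam (X : Set (A × B)) : IsModel X (sectionTeam X) where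
  fst_image := by
    ext z
    constructor
    · rintro ⟨_, ⟨⟨g, a⟩, rfl⟩, rfl⟩
      exact (g.1 a).2
    · intro hz
      obtain ⟨g, hg⟩ := Section.exists_apply_eq hz
      exact ⟨_, ⟨⟨g, ⟨z.1, Set.mem_image_of_mem _ hz⟩⟩, rfl⟩, by simp [hg]⟩
  weakDeterminism := by
    rintro _ ⟨⟨g, a⟩, rfl⟩ _ ⟨⟨g', a'⟩, rfl⟩ h
    simp only [Prod.mk.injEq] at h
    obtain ⟨hm, rfl⟩ := h
    have ha : a = a' := Subtype.ext (by rw [← g.2 a, ← g.2 a', hm])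
    rw [ha]
  lambdaIndependence := by
    rintro _ ⟨⟨g, a⟩, rfl⟩ _ ⟨⟨g', -⟩, rfl⟩ -
    refine ⟨_, ⟨⟨g', a⟩, rfl⟩, rfl, ?_, rfl⟩
    simp only [g.2 a, g'.2 a]

theorem exists_isModel_of_finite {X : Set (A × B)} (hX : X.Finite) :
    ∃ (Λ : Type) (_ : Fintype Λ) (Y : Set ((A × B) × Λ)), IsModel X Y := by
  have : Finite X := hX
  let e := Finite.equivFin (Section X)
  exact ⟨_, inferInstance, _, (isModel_sectionTeam X).image_prodMap e.injective⟩

end HiddenVariable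

/-- Every finite relational empirical model admits an empirically equivalent
hidden-variable model satisfying Weak Determinism and λ-Independence. -/
theorem stmt14 {n : ℕ} {M O : Type*}
    (X : Set ((Fin n → M) × (Fin n → O))) (hfin : X.Finite) :
    ∃ (Λ : Type) (_ : Fintype Λ) (Y : Set (((Fin n → M) × (Fin n → O)) × Λ)),
      Prod.fst '' Y = X ∧
      relDep Y (fun s => (s.1.1, s.2)) (fun s => s.1.2) ∧
      relIndep Y (fun s => s.1.1) (fun s => s.2) (fun _ => ()) := by
  obtain ⟨Λ, hΛ, Y, hY⟩ := HiddenVariable.exists_isModel_of_finite hfin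
  exact ⟨Λ, hΛ, Y, hY.fst_image, hY.weakDeterminism, hY.lambdaIndependence⟩
end

section
/- Relational Hardy-style no-go theorem (Bell): let X be any relational team over variables (m₁, m₂, o₁, o₂) with X(m₁,m₂) = {(a₁,b₁),(a₁,b₂),(a₂,b₁),(a₂,b₂)}, outcome values in {R,G} with R ≠ G, such that (a₁b₁, RR) ∈ X, (a₁b₂, RR) ∉ X, (a₂b₁, RR) ∉ X, and (a₂b₂, GG) ∉ X. Then there is no finite extension Y of X to a variable λ, restricting to X on (m₁,m₂,o₁,o₂), that satisfies Strong Determinism (dep(m₁λ,o₁) ∧ dep(m₂λ,o₂)) and λ-Independence (m₁m₂ ⊥ λ). -/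
/-!
Fix the hidden value `l` of an assignment of `Y` extending `((a₁, b₁), (R, R))`, and look at the
fibre of `Y` over `l`. By Strong Determinism each outcome in the fibre is a function of the local
measurement only, and by λ-Independence every measurement pair occurs in the fibre. So the fibre is
a local deterministic model inside `X`, and Hardy's argument rules it out: `o₁(a₁) = R` and
`o₂(b₁) = R` force `o₂(b₂) = G` and `o₁(a₂) = G`, so `((a₂, b₂), (G, G))` lies in the fibre.
-/

def fiber {σ Λ : Type*} (Y : Set (σ × Λ)) (l : Λ) : Set σ := {x | (x, l) ∈ Y}

theorem fiber_subset_image_fst {σ Λ : Type*} (Y : Set (σ × Λ)) (l : Λ) :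
    fiber Y l ⊆ Prod.fst '' Y :=
  fun x hx => ⟨(x, l), hx, rfl⟩

theorem relDep.fiber {σ Λ α β : Type*} {Y : Set (σ × Λ)} {f : σ → α} {g : σ → β}
    (h : relDep Y (fun s => (f s.1, s.2)) (fun s => g s.1)) (l : Λ) :
    relDep (fiber Y l) f g :=
  fun x hx x' hx' hf => h (x, l) hx (x', l) hx' (congrArg (·, l) hf)

theorem relIndep.image_fst_subset_fiber {α β Λ : Type*} {Y : Set ((α × β) × Λ)}
    (h : relIndep Y (fun s => s.1.1) (fun s => s.2) (fun _ => ())) {s₀ : (α × β) × Λ}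
    (hs₀ : s₀ ∈ Y) :
    Prod.fst '' (Prod.fst '' Y) ⊆ Prod.fst '' fiber Y s₀.2 := by
  rintro _ ⟨_, ⟨s, hs, rfl⟩, rfl⟩
  obtain ⟨⟨x, l⟩, hxl, -, hm, rfl⟩ := h s hs s₀ hs₀ rfl
  exact ⟨x, hxl, hm⟩

theorem hardy_no_local_deterministic {M₁ M₂ O : Type*} {Z : Set ((M₁ × M₂) × (O × O))}
    {a₁ a₂ : M₁} {b₁ b₂ : M₂} {R G : O}
    (hO : ∀ z ∈ Z, (z.2.1 = R ∨ z.2.1 = G) ∧ (z.2.2 = R ∨ z.2.2 = G))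
    (hd₁ : relDep Z (fun z => z.1.1) (fun z => z.2.1))
    (hd₂ : relDep Z (fun z => z.1.2) (fun z => z.2.2))
    (hM : {(a₁, b₂), (a₂, b₁), (a₂, b₂)} ⊆ Prod.fst '' Z)
    (h3 : ((a₁, b₁), (R, R)) ∈ Z) (h4 : ((a₁, b₂), (R, R)) ∉ Z)
    (h5 : ((a₂, b₁), (R, R)) ∉ Z) (h6 : ((a₂, b₂), (G, G)) ∉ Z) : False := by
  obtain ⟨⟨_, x₁, x₂⟩, h12, rfl⟩ := hM (by simp : (a₁, b₂) ∈ _)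
  obtain ⟨⟨_, y₁, y₂⟩, h21, rfl⟩ := hM (by simp : (a₂, b₁) ∈ _)
  obtain ⟨⟨_, z₁, z₂⟩, h22, rfl⟩ := hM (by simp : (a₂, b₂) ∈ _)
  have hx₁ : x₁ = R := hd₁ _ h12 _ h3 rfl
  have hy₂ : y₂ = R := hd₂ _ h21 _ h3 rfl
  have hx₂ : x₂ = G := (hO _ h12).2.resolve_left fun h : x₂ = R => h4 (by rwa [hx₁, h] at h12)
  have hy₁ : y₁ = G := (hO _ h21).1.resolve_left fun h : y₁ = R => h5 (by rwa [hy₂, h] at h21)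
  have hz₁ : z₁ = G := (hd₁ _ h22 _ h21 rfl).trans hy₁
  have hz₂ : z₂ = G := (hd₂ _ h22 _ h12 rfl).trans hx₂
  exact h6 (by rwa [hz₁, hz₂] at h22)

theorem stmt16_general {M₁ M₂ O : Type*} (X : Set ((M₁ × M₂) × (O × O)))
    (a₁ a₂ : M₁) (b₁ b₂ : M₂) (R G : O)
    (hM : Prod.fst '' X = {(a₁, b₁), (a₁, b₂), (a₂, b₁), (a₂, b₂)})
    (hO : ∀ s ∈ X, (s.2.1 = R ∨ s.2.1 = G) ∧ (s.2.2 = R ∨ s.2.2 = G))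
    (h3 : ((a₁, b₁), (R, R)) ∈ X)
    (h4 : ((a₁, b₂), (R, R)) ∉ X)
    (h5 : ((a₂, b₁), (R, R)) ∉ X)
    (h6 : ((a₂, b₂), (G, G)) ∉ X) :
    ¬ ∃ (Λ : Type) (_ : Fintype Λ) (Y : Set (((M₁ × M₂) × (O × O)) × Λ)),
        Prod.fst '' Y = X ∧
        relDep Y (fun s => (s.1.1.1, s.2)) (fun s => s.1.2.1) ∧
        relDep Y (fun s => (s.1.1.2, s.2)) (fun s => s.1.2.2) ∧
        relIndep Y (fun s => s.1.1) (fun s => s.2) (fun _ => ()) := by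
  rintro ⟨Λ, -, Y, rfl, hd₁, hd₂, hind⟩
  obtain ⟨⟨_, l⟩, hl, rfl⟩ := h3
  have hsub : fiber Y l ⊆ Prod.fst '' Y := fiber_subset_image_fst Y l
  have hcover := hind.image_fst_subset_fiber hl
  rw [hM] at hcover
  exact hardy_no_local_deterministic (Z := fiber Y l) (fun z hz => hO z (hsub hz))
    (hd₁.fiber l) (hd₂.fiber l) (fun m hm => hcover (Or.inr hm)) hl
    (fun h => h4 (hsub h)) (fun h => h5 (hsub h)) (fun h => h6 (hsub h))

/-- Relational Hardy-style no-go theorem (Bell): no finite hidden-variable extension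
of a Hardy-type empirical model satisfies Strong Determinism and λ-Independence.
Assignments are pairs ((m₁,m₂),(o₁,o₂)). -/
theorem stmt16 {M₁ M₂ O : Type*} (X : Set ((M₁ × M₂) × (O × O)))
    (a₁ a₂ : M₁) (b₁ b₂ : M₂) (R G : O) (hRG : R ≠ G)
    (hM : Prod.fst '' X = {(a₁, b₁), (a₁, b₂), (a₂, b₁), (a₂, b₂)})
    (hO : ∀ s ∈ X, (s.2.1 = R ∨ s.2.1 = G) ∧ (s.2.2 = R ∨ s.2.2 = G))
    (h3 : ((a₁, b₁), (R, R)) ∈ X)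
    (h4 : ((a₁, b₂), (R, R)) ∉ X)
    (h5 : ((a₂, b₁), (R, R)) ∉ X)
    (h6 : ((a₂, b₂), (G, G)) ∉ X) :
    ¬ ∃ (Λ : Type) (_ : Fintype Λ) (Y : Set (((M₁ × M₂) × (O × O)) × Λ)),
        Prod.fst '' Y = X ∧
        relDep Y (fun s => (s.1.1.1, s.2)) (fun s => s.1.2.1) ∧
        relDep Y (fun s => (s.1.1.2, s.2)) (fun s => s.1.2.2) ∧
        relIndep Y (fun s => s.1.1) (fun s => s.2) (fun _ => ()) :=
  stmt16_general X a₁ a₂ b₁ b₂ R G hM hO h3 h4 h5 h6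
end

section
/- Combinatorial Kochen-Specker lemma (parity argument): let Z be a finite set of size 18 and X₁,...,X₉ four-element subsets of Z such that every element of Z belongs to exactly two of the sets Xⱼ. Then there is no subset S ⊆ Z with |S ∩ Xⱼ| = 1 for all j = 1,...,9. -/
open Finset

theorem Finset.sum_card_inter_eq_card_mul {ι α : Type*} [DecidableEq α] (s : Finset ι)
    (X : ι → Finset α) (S : Finset α) {n : ℕ} (h : ∀ a ∈ S, #{j ∈ s | a ∈ X j} = n) :
    ∑ j ∈ s, #(S ∩ X j) = #S * n := by
  calc ∑ j ∈ s, #(S ∩ X j) = ∑ a ∈ S, #{j ∈ s | a ∈ X j} := by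
        simp_rw [← filter_mem_eq_inter]
        exact (sum_card_bipartiteAbove_eq_sum_card_bipartiteBelow (r := fun a j => a ∈ X j)).symm
    _ = #S * n := sum_const_nat h

theorem not_forall_card_inter_eq_one_of_odd {ι α : Type*} [Fintype ι] [DecidableEq α]
    (X : ι → Finset α) (S : Finset α) (hodd : Odd (Fintype.card ι))
    (htwo : ∀ a ∈ S, #{j | a ∈ X j} = 2) : ¬ ∀ j, #(S ∩ X j) = 1 := by
  intro hone
  have hcount : Fintype.card ι = #S * 2 := by
    simpa [hone] using sum_card_inter_eq_card_mul univ X S htwo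
  exact Nat.not_even_iff_odd.mpr hodd ⟨#S, by omega⟩

theorem stmt17_general {α : Type*} [DecidableEq α] (Z : Finset α)
    (X : Fin 9 → Finset α)
    (htwo : ∀ a ∈ Z, (Finset.univ.filter (fun j => a ∈ X j)).card = 2) :
    ¬ ∃ S : Finset α, S ⊆ Z ∧ ∀ j, (S ∩ X j).card = 1 := by
  rintro ⟨S, hSZ, hone⟩
  exact not_forall_card_inter_eq_one_of_odd X S (by decide) (fun a ha => htwo a (hSZ ha)) hone

/-- Combinatorial Kochen-Specker lemma: if Z has 18 elements and X₁,…,X₉ are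
four-element subsets of Z such that every element of Z lies in exactly two of them,
then no subset S of Z meets every Xⱼ in exactly one element. -/
theorem stmt17 {α : Type*} [DecidableEq α] (Z : Finset α) (hZ : Z.card = 18)
    (X : Fin 9 → Finset α) (hsub : ∀ j, X j ⊆ Z) (hcard : ∀ j, (X j).card = 4)
    (htwo : ∀ a ∈ Z, (Finset.univ.filter (fun j => a ∈ X j)).card = 2) :
    ¬ ∃ S : Finset α, S ⊆ Z ∧ ∀ j, (S ∩ X j).card = 1 :=
  stmt17_general Z X htwo
end

section
/- Team-semantic Kochen-Specker via non-contextual choice: suppose X is a team of 9 assignments over variables m₁,...,m₄, with values in a set Z of size 18, such that the induced 4-element sets Bᵢ = {sᵢ(m₁),...,sᵢ(m₄)} are pairwise distinct, each assignment is injective on {m₁,...,m₄}, and every element of Z lies in exactly two of the sets Bᵢ. Then X does not satisfy the non-contextual choice atom ncc(m₁m₂m₃m₄): there is no function f mapping each s ∈ X to some f(s) ∈ {s(m₁),...,s(m₄)} such that for all s, t ∈ X, if f(s) ∈ {t(m₁),...,t(m₄)} then f(t) = f(s). -/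
/-!
A non-contextual choice `f` selects from each block the same value as every other block
containing that value, so the blocks with choice `f i` are exactly the blocks containing `f i`.
When every value lies in exactly two blocks, the fibres of `f` therefore all have two elements and
partition the blocks, so the number of blocks must be even; but there are nine.
-/

open Finset

theorem dvd_card_of_card_fiber_eq {α β : Type*} [Fintype α] [DecidableEq β] (f : α → β) {n : ℕ}
    (hf : ∀ a, #{x | f x = f a} = n) : n ∣ Fintype.card α := by
  have hfiber : ∀ b ∈ univ.image f, #{x | f x = b} = n := by
    rintro b hb
    obtain ⟨a, -, rfl⟩ := mem_image.mp hb
    exact hf a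
  refine ⟨#(univ.image f), ?_⟩
  rw [← card_univ, card_eq_sum_card_image f univ, sum_congr rfl hfiber, sum_const, smul_eq_mul,
    mul_comm]

def IsNonContextualChoice {ι κ Z : Type*} (s : ι → κ → Z) (f : ι → Z) : Prop :=
  (∀ i, ∃ k, f i = s i k) ∧ ∀ i j, (∃ k, f i = s j k) → f j = f i

theorem IsNonContextualChoice.filter_eq_eq {ι κ Z : Type*} [Fintype ι] [Fintype κ]
    [DecidableEq Z] {s : ι → κ → Z} {f : ι → Z} (hf : IsNonContextualChoice s f) (i : ι) :
    univ.filter (fun j => f j = f i) = univ.filter (fun j => f i ∈ univ.image (s j)) := by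
  ext j
  simp only [mem_filter, mem_univ, true_and, mem_image]
  constructor
  · rintro hj
    obtain ⟨k, hk⟩ := hf.1 j
    exact ⟨k, by rw [← hk, hj]⟩
  · rintro ⟨k, hk⟩
    exact hf.2 i j ⟨k, hk.symm⟩

theorem IsNonContextualChoice.dvd_card {ι κ Z : Type*} [Fintype ι] [Fintype κ] [DecidableEq Z]
    {s : ι → κ → Z} {f : ι → Z} (hf : IsNonContextualChoice s f) {n : ℕ}
    (hcover : ∀ z, #{i | z ∈ univ.image (s i)} = n) : n ∣ Fintype.card ι :=
  dvd_card_of_card_fiber_eq f fun i => by rw [hf.filter_eq_eq i, hcover]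

theorem stmt18_general {Z : Type*} [DecidableEq Z]
    (s : Fin 9 → Fin 4 → Z)
    (htwo : ∀ z : Z,
      (Finset.univ.filter (fun i : Fin 9 => z ∈ Finset.image (s i) Finset.univ)).card = 2) :
    ¬ ∃ f : Fin 9 → Z,
        (∀ i, ∃ k, f i = s i k) ∧
        (∀ i j : Fin 9, (∃ k, f i = s j k) → f j = f i) := by
  rintro ⟨f, hf⟩
  have h := IsNonContextualChoice.dvd_card (s := s) hf htwo
  rw [Fintype.card_fin] at h
  omega

/-- Team-semantic Kochen-Specker via non-contextual choice: a team of 9 assignments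
over m₁,…,m₄ with values in an 18-element set Z, whose induced 4-element sets
Bᵢ = {sᵢ(m₁),…,sᵢ(m₄)} are pairwise distinct and cover every element of Z exactly
twice, does not satisfy the non-contextual choice atom ncc(m₁m₂m₃m₄). -/
theorem stmt18 {Z : Type*} [Fintype Z] [DecidableEq Z] (hZ : Fintype.card Z = 18)
    (s : Fin 9 → Fin 4 → Z)
    (hinj : ∀ i, Function.Injective (s i))
    (hdist : ∀ i j : Fin 9,
      Finset.image (s i) Finset.univ = Finset.image (s j) Finset.univ → i = j)
    (htwo : ∀ z : Z,
      (Finset.univ.filter (fun i : Fin 9 => z ∈ Finset.image (s i) Finset.univ)).card = 2) :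
    ¬ ∃ f : Fin 9 → Z,
        (∀ i, ∃ k, f i = s i k) ∧
        (∀ i j : Fin 9, (∃ k, f i = s j k) → f j = f i) :=
  stmt18_general s htwo
end
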